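/- Let κ and ν be real numbers with κ > 0, ν > 0, κ + ν ≤ 1, and 2κ(1−ν) > ν. Then there exists q̂ with ν < q̂ < 1 such that h(q̂) = q̂. -/
import Mathlib


/-- The fixed-point map governing extinction probabilities of the
delayed-branching BRW. -/
def h (κ ν q : ℝ) : ℝ :=
  ν + (1 - κ - ν) * q + κ * (1 - ν) ^ 2 * q ^ 3 + κ * ν ^ 2 * q
    + 2 * κ * ν * (1 - ν) * q ^ 2

theorem stmt_4 (κ ν : ℝ) (hκ : 0 < κ) (hν : 0 < ν) (hκν : κ + ν ≤ 1)
    (hsup : ν < 2 * κ * (1 - ν)) :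
    ∃ q : ℝ, ν < q ∧ q < 1 ∧ h κ ν q = q := by
  have hν1 : ν < 1 := by nlinarith
  set P : ℝ → ℝ := fun q => κ * (1 - ν) ^ 2 * q ^ 2 + κ * (1 - ν ^ 2) * q - ν with hP
  have hcont : ContinuousOn P (Set.Icc ν 1) := by fun_prop
  have hPν : P ν < 0 := by
    have h1 : κ ≤ 1 - ν := by linarith
    have h2 : (0:ℝ) < ν * (2 - ν) := by nlinarith
    simp only [hP]
    nlinarith [sq_nonneg (ν * (2 - ν)), mul_pos hν h2, sq_nonneg (1 - ν),
      mul_pos hν (mul_pos hν h2)]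
  have hP1 : 0 < P 1 := by simp only [hP]; nlinarith
  have hsub := intermediate_value_Ioo (le_of_lt hν1) hcont
  have h0 : (0:ℝ) ∈ Set.Ioo (P ν) (P 1) := ⟨hPν, hP1⟩
  obtain ⟨q, hq, hq0⟩ := hsub h0
  refine ⟨q, hq.1, hq.2, ?_⟩
  simp only [hP] at hq0
  unfold h
  linear_combination (q - 1) * hq0
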